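/- Let Q be a nondegenerate complex quadratic form in three variables and Δ_Q its associated Laplace-type operator. For any two polynomials M, N ∈ ℂ[x,y,z], the 'complex Dirichlet problem' Δ_Q(P) = M together with P ≡ N modulo the ideal ⟨Q − 1⟩ has a unique polynomial solution P. -/

import Mathlib

open MvPolynomial

/-- The Laplace-type operator `Δ_Q = Σ b^{jk} ∂_j ∂_k` associated to an invertible
symmetric matrix `B` (with `(b^{jk}) = B⁻¹`). -/
noncomputable def lapQ (B : Matrix (Fin 3) (Fin 3) ℂ) (P : MvPolynomial (Fin 3) ℂ) :
    MvPolynomial (Fin 3) ℂ :=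
  ∑ j : Fin 3, ∑ k : Fin 3, B⁻¹ j k • pderiv j (pderiv k P)

/-- The quadratic form `Q(v) = v B vᵀ` as a polynomial. -/
noncomputable def quadForm (B : Matrix (Fin 3) (Fin 3) ℂ) : MvPolynomial (Fin 3) ℂ :=
  ∑ j : Fin 3, ∑ k : Fin 3, B j k • (X j * X k)

/-!
A polynomial `P` with `P ≡ N` modulo `⟨Q - 1⟩` is `N + (Q - 1) S`, so the claim is that
`Φ S := Δ((Q - 1) S)` is bijective. In `n` variables, `Δ(Q S) = Q ΔS + 4 E S + 2n S` with `E` the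
Euler operator, so `Φ` preserves the space of polynomials of degree `≤ d` and acts on the top
homogeneous component `S_d` as `S_d ↦ Q ΔS_d + (4d + 2n) S_d`. This symbol is injective: if
`Q ΔS = -c S` with `c > 0`, then `S = Q T` and `T` satisfies the same equation with `c` replaced by
`c + 4(d - 2) + 2n`, so `T = 0` by induction on the degree. Hence `Φ` is injective, and surjective
on each of those finite-dimensional spaces.
-/

namespace MvPolynomial

variable {σ : Type*}

section Components

variable {R : Type*} [CommSemiring R]

attribute [local instance] gradedAlgebra in
theorem homogeneousComponent_mul_of_isHomogeneous {φ : MvPolynomial σ R} {m : ℕ}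
    (hφ : φ.IsHomogeneous m) (n : ℕ) (ψ : MvPolynomial σ R) :
    homogeneousComponent (m + n) (φ * ψ) = φ * homogeneousComponent n ψ := by
  simp only [← decomposition.decompose'_apply]
  exact DirectSum.coe_decompose_mul_add_of_left_mem (𝒜 := homogeneousSubmodule σ R) hφ

theorem homogeneousComponent_pderiv (i : σ) (n : ℕ) (p : MvPolynomial σ R) :
    homogeneousComponent n (pderiv i p) = pderiv i (homogeneousComponent (n + 1) p) := by
  induction p using MvPolynomial.induction_on' with
  | monomial u a =>
    have hu : (monomial u a).IsHomogeneous u.degree := isHomogeneous_monomial a rfl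
    rw [homogeneousComponent_of_mem hu.pderiv, homogeneousComponent_of_mem hu]
    split_ifs with h₁ h₂ h₂
    · rfl
    · obtain rfl : u = 0 := (Finsupp.degree_eq_zero_iff u).mp (by omega)
      rw [monomial_zero', pderiv_C, map_zero]
    · omega
    · rw [map_zero]
  | add p q hp hq => simp only [map_add, hp, hq]

theorem homogeneousComponent_totalDegree_ne_zero {p : MvPolynomial σ R} (hp : p ≠ 0) :
    homogeneousComponent p.totalDegree p ≠ 0 := by
  obtain ⟨u, hu, hdeg⟩ := Finset.exists_mem_eq_sup p.support (support_nonempty.mpr hp)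
    fun u : σ →₀ ℕ => u.degree
  rw [Ne, ← support_eq_empty, support_homogeneousComponent, Finset.filter_eq_empty_iff, not_forall]
  exact ⟨u, fun h => h hu hdeg.symm⟩

theorem totalDegree_le_of_homogeneousComponent_eq_zero {p : MvPolynomial σ R} {d : ℕ}
    (h : ∀ n, d < n → homogeneousComponent n p = 0) : p.totalDegree ≤ d := by
  by_contra! hd
  have hp : p ≠ 0 := by
    rintro rfl
    simp at hd
  exact homogeneousComponent_totalDegree_ne_zero hp (h _ hd)

end Components

section Laplacian

variable {R : Type*} [CommSemiring R] [Fintype σ]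

noncomputable def laplacian (A : Matrix σ σ R) : MvPolynomial σ R →ₗ[R] MvPolynomial σ R :=
  ∑ j, ∑ k, A j k • ((pderiv j).toLinearMap ∘ₗ (pderiv k).toLinearMap)

theorem laplacian_apply (A : Matrix σ σ R) (p : MvPolynomial σ R) :
    laplacian A p = ∑ j, ∑ k, A j k • pderiv j (pderiv k p) := by
  simp [laplacian]

theorem homogeneousComponent_laplacian (A : Matrix σ σ R) (n : ℕ) (p : MvPolynomial σ R) :
    homogeneousComponent n (laplacian A p) = laplacian A (homogeneousComponent (n + 2) p) := by
  simp only [laplacian_apply, map_sum, map_smul, homogeneousComponent_pderiv]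

theorem laplacian_eq_zero_of_totalDegree_lt_two (A : Matrix σ σ R) {p : MvPolynomial σ R}
    (hp : p.totalDegree < 2) : laplacian A p = 0 := by
  rw [← sum_homogeneousComponent (laplacian A p)]
  refine Finset.sum_eq_zero fun n _ => ?_
  rw [homogeneousComponent_laplacian, homogeneousComponent_eq_zero _ _ (by omega), map_zero]

theorem IsHomogeneous.laplacian (A : Matrix σ σ R) {p : MvPolynomial σ R} {n : ℕ}
    (hp : p.IsHomogeneous n) : (laplacian A p).IsHomogeneous (n - 2) := by
  rw [laplacian_apply]
  refine IsHomogeneous.sum _ _ _ fun j _ => IsHomogeneous.sum _ _ _ fun k _ => ?_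
  have := (hp.pderiv (i := k)).pderiv (i := j)
  rw [Nat.sub_sub] at this
  exact (homogeneousSubmodule σ R (n - 2)).smul_mem (A j k) this

theorem laplacian_mul {A : Matrix σ σ R} (hA : A.IsSymm) (f g : MvPolynomial σ R) :
    laplacian A (f * g) = laplacian A f * g +
      2 * ∑ j, (∑ k, A j k • pderiv k f) * pderiv j g + f * laplacian A g := by
  have hterm : ∀ j k, A j k • pderiv j (pderiv k (f * g)) =
      A j k • pderiv j (pderiv k f) * g + A j k • pderiv k f * pderiv j g +
        A j k • (pderiv j f * pderiv k g) + f * (A j k • pderiv j (pderiv k g)) := by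
    intro j k
    simp only [pderiv_mul, map_add, smul_eq_C_mul]
    ring
  have hswap : ∑ j, ∑ k, A j k • (pderiv j f * pderiv k g) =
      ∑ j, ∑ k, A j k • pderiv k f * pderiv j g := by
    rw [Finset.sum_comm]
    simp_rw [hA.apply, smul_mul_assoc]
  simp only [laplacian_apply, hterm, Finset.sum_add_distrib, ← Finset.sum_mul, ← Finset.mul_sum,
    hswap]
  ring

end Laplacian

section Quadratic

variable {R : Type*} [CommRing R] [Fintype σ] {A B : Matrix σ σ R}

noncomputable def quadraticPoly (B : Matrix σ σ R) : MvPolynomial σ R :=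
  ∑ j, ∑ k, B j k • (X j * X k)

theorem isHomogeneous_quadraticPoly (B : Matrix σ σ R) : (quadraticPoly B).IsHomogeneous 2 :=
  IsHomogeneous.sum _ _ _ fun j _ => IsHomogeneous.sum _ _ _ fun k _ =>
    (homogeneousSubmodule σ R 2).smul_mem (B j k) ((isHomogeneous_X R j).mul (isHomogeneous_X R k))

noncomputable def dirichletOp (A B : Matrix σ σ R) : MvPolynomial σ R →ₗ[R] MvPolynomial σ R :=
  laplacian A ∘ₗ LinearMap.mulLeft R (quadraticPoly B - 1)

theorem dirichletOp_apply (A B : Matrix σ σ R) (S : MvPolynomial σ R) :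
    dirichletOp A B S = laplacian A ((quadraticPoly B - 1) * S) :=
  rfl

theorem homogeneousComponent_dirichletOp (A B : Matrix σ σ R) (n : ℕ) (S : MvPolynomial σ R) :
    homogeneousComponent n (dirichletOp A B S) = laplacian A
      (quadraticPoly B * homogeneousComponent n S - homogeneousComponent (n + 2) S) := by
  rw [dirichletOp_apply, homogeneousComponent_laplacian, sub_mul, one_mul, map_sub, add_comm n,
    homogeneousComponent_mul_of_isHomogeneous (isHomogeneous_quadraticPoly B)]

theorem totalDegree_dirichletOp_le (A B : Matrix σ σ R) {S : MvPolynomial σ R} {d : ℕ}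
    (hS : S.totalDegree ≤ d) : (dirichletOp A B S).totalDegree ≤ d :=
  totalDegree_le_of_homogeneousComponent_eq_zero fun n hn => by
    rw [homogeneousComponent_dirichletOp, homogeneousComponent_eq_zero n S (by omega),
      homogeneousComponent_eq_zero (n + 2) S (by omega), mul_zero, sub_zero, map_zero]

variable [DecidableEq σ]

theorem pderiv_quadraticPoly (hB : B.IsSymm) (i : σ) :
    pderiv i (quadraticPoly B) = 2 * ∑ l, B i l • X l := by
  simp [quadraticPoly, pderiv_X, Pi.single_apply, Finset.sum_add_distrib, two_mul, hB.apply i]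

theorem sum_smul_pderiv_quadraticPoly (hB : B.IsSymm) (hAB : A * B = 1) (j : σ) :
    ∑ k, A j k • pderiv k (quadraticPoly B) = 2 * X j := by
  simp only [pderiv_quadraticPoly hB, ← mul_smul_comm, ← Finset.mul_sum, Finset.smul_sum,
    smul_smul]
  rw [Finset.sum_comm]
  simp only [← Finset.sum_smul, ← Matrix.mul_apply, hAB, Matrix.one_apply, ite_smul, one_smul,
    zero_smul, Finset.sum_ite_eq, Finset.mem_univ, if_true]

theorem laplacian_quadraticPoly (hB : B.IsSymm) (hAB : A * B = 1) :
    laplacian A (quadraticPoly B) = 2 * Fintype.card σ := by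
  calc laplacian A (quadraticPoly B)
        = ∑ j, pderiv j (∑ k, A j k • pderiv k (quadraticPoly B)) := by simp [laplacian_apply]
    _ = ∑ j, pderiv j (2 * X j) := by simp only [sum_smul_pderiv_quadraticPoly hB hAB]
    _ = 2 * Fintype.card σ := by simp [← map_ofNat C 2, pderiv_X, mul_comm]

theorem laplacian_quadraticPoly_mul (hB : B.IsSymm) (hAB : A * B = 1) {n : ℕ}
    {S : MvPolynomial σ R} (hS : S.IsHomogeneous n) :
    laplacian A (quadraticPoly B * S) = quadraticPoly B * laplacian A S +
      ((4 * n + 2 * Fintype.card σ : ℕ) : MvPolynomial σ R) * S := by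
  have hA : A.IsSymm := Matrix.inv_eq_left_inv hAB ▸ hB.inv
  have hEuler : ∑ i, X i * pderiv i S = n * S := by rw [hS.sum_X_mul_pderiv, nsmul_eq_mul]
  simp only [laplacian_mul hA, laplacian_quadraticPoly hB hAB,
    sum_smul_pderiv_quadraticPoly hB hAB, mul_assoc, ← Finset.mul_sum, hEuler]
  push_cast
  ring

end Quadratic

section Dirichlet

variable {K : Type*} [Field K] [CharZero K] [Fintype σ] [DecidableEq σ] {A B : Matrix σ σ K}

theorem eq_zero_of_quadraticPoly_mul_laplacian_add_eq_zero (hB : B.IsSymm) (hAB : A * B = 1)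
    {d c : ℕ} {S : MvPolynomial σ K} (hS : S.IsHomogeneous d) (hc : c ≠ 0)
    (h : quadraticPoly B * laplacian A S + c * S = 0) : S = 0 := by
  induction d using Nat.strong_induction_on generalizing S c with
  | _ d ih =>
  rcases lt_or_ge d 2 with hd | hd
  · rw [laplacian_eq_zero_of_totalDegree_lt_two A (hS.totalDegree_le.trans_lt hd), mul_zero,
      zero_add] at h
    exact (mul_eq_zero.mp h).resolve_left (Nat.cast_ne_zero.mpr hc)
  obtain ⟨T, hT⟩ : ∃ T, T = -(C (c : K)⁻¹ * laplacian A S) := ⟨_, rfl⟩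
  have hcinv : C (c : K)⁻¹ * (c : MvPolynomial σ K) = 1 := by
    rw [← map_natCast C, ← C_mul, inv_mul_cancel₀ (Nat.cast_ne_zero.mpr hc), C_1]
  have hST : S = quadraticPoly B * T := by
    linear_combination C (c : K)⁻¹ * h - S * hcinv - quadraticPoly B * hT
  have hTd : T.IsHomogeneous (d - 2) := hT ▸ ((hS.laplacian A).C_mul _).neg
  have hQT := laplacian_quadraticPoly_mul hB hAB hTd
  rw [← hST] at hQT
  push_cast at hQT
  have hT0 : T = 0 := by
    refine ih (d - 2) (by omega) hTd (c := c + (4 * (d - 2) + 2 * Fintype.card σ)) (by omega) ?_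
    push_cast
    linear_combination -hQT - laplacian A S * hcinv + (c : MvPolynomial σ K) * hT
  rw [hST, hT0, mul_zero]

theorem dirichletOp_injective [Nonempty σ] (hB : B.IsSymm) (hAB : A * B = 1) :
    Function.Injective (dirichletOp A B) := by
  refine (injective_iff_map_eq_zero _).mpr fun S hS => ?_
  by_contra hS0
  have htop := congrArg (homogeneousComponent S.totalDegree) hS
  rw [homogeneousComponent_dirichletOp,
    homogeneousComponent_eq_zero (S.totalDegree + 2) S (by omega), sub_zero,
    laplacian_quadraticPoly_mul hB hAB (homogeneousComponent_isHomogeneous _ _), map_zero] at htop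
  exact homogeneousComponent_totalDegree_ne_zero hS0 <|
    eq_zero_of_quadraticPoly_mul_laplacian_add_eq_zero hB hAB
      (homogeneousComponent_isHomogeneous _ _) (by have := Fintype.card_pos (α := σ); omega) htop

theorem dirichletOp_surjective [Nonempty σ] (hB : B.IsSymm) (hAB : A * B = 1) :
    Function.Surjective (dirichletOp A B) := by
  intro M
  have hmaps : ∀ S ∈ restrictTotalDegree σ K M.totalDegree,
      dirichletOp A B S ∈ restrictTotalDegree σ K M.totalDegree := fun S hS => by
    rw [mem_restrictTotalDegree] at hS ⊢
    exact totalDegree_dirichletOp_le A B hS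
  have hinj : Function.Injective ((dirichletOp A B).restrict hmaps) := fun S T hST =>
    Subtype.ext (dirichletOp_injective hB hAB (congrArg Subtype.val hST))
  obtain ⟨⟨S, _⟩, hS⟩ := LinearMap.injective_iff_surjective.mp hinj
    ⟨M, (mem_restrictTotalDegree _ _ _).mpr le_rfl⟩
  exact ⟨S, congrArg Subtype.val hS⟩

theorem existsUnique_laplacian_eq_and_sub_mem_span [Nonempty σ] (hB : B.IsSymm) (hAB : A * B = 1)
    (M N : MvPolynomial σ K) :
    ∃! P, laplacian A P = M ∧ P - N ∈ Ideal.span {quadraticPoly B - 1} := by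
  obtain ⟨S, hS⟩ := dirichletOp_surjective hB hAB (M - laplacian A N)
  refine ⟨N + (quadraticPoly B - 1) * S, ⟨?_, ?_⟩, ?_⟩
  · rw [map_add, ← dirichletOp_apply, hS, add_sub_cancel]
  · rw [add_sub_cancel_left]
    exact Ideal.mul_mem_right _ _ (Ideal.mem_span_singleton_self _)
  · rintro P ⟨hPM, hPN⟩
    obtain ⟨T, hT⟩ := Ideal.mem_span_singleton'.mp hPN
    have hTS : T = S := dirichletOp_injective hB hAB <| by
      rw [hS, dirichletOp_apply, mul_comm, hT, map_sub, hPM]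
    rw [← hTS, mul_comm, hT, add_sub_cancel]

end Dirichlet

end MvPolynomial

/-- The complex Dirichlet problem: for a nondegenerate quadratic form `Q` in three
variables and any polynomials `M, N`, there is a unique polynomial `P` with
`Δ_Q(P) = M` and `P ≡ N` modulo the ideal `⟨Q − 1⟩`. -/
theorem dirichlet_problem_unique_solution (B : Matrix (Fin 3) (Fin 3) ℂ)
    (hB : B.IsSymm) (hBinv : IsUnit B.det)
    (M N : MvPolynomial (Fin 3) ℂ) :
    ∃! P : MvPolynomial (Fin 3) ℂ,
      lapQ B P = M ∧ P - N ∈ Ideal.span {quadForm B - 1} := by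
  have hlapQ : lapQ B = laplacian B⁻¹ := funext fun P => (laplacian_apply B⁻¹ P).symm
  rw [hlapQ]
  exact existsUnique_laplacian_eq_and_sub_mem_span hB (Matrix.nonsing_inv_mul B hBinv) M N
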